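/- arXiv:2211.14425 — 2 statements merged into one kernel-verified Lean document; each statement's English description precedes it below -/
import Mathlib

section
/- Consider an L-layer GNN on a τ-regular graph G with vertex partition V = S ∪ T (disjoint), m cut edges between S and T, layer maps H_{ℓ+1} = σ(H_ℓ W_{1ℓ}ᵀ + A H_ℓ W_{2ℓ}ᵀ) with σ the ReLU (1-Lipschitz), d-dimensional features, and operator-norm constraints ‖W_{1ℓ}‖₁ ≤ 1, ‖W_{2ℓ}‖₁ ≤ 1. Define the perturbation propagation ε_{ℓ+1} = σ((H_ℓ+ε_ℓ)W_{1ℓ}ᵀ + A(H_ℓ+ε_ℓ)W_{2ℓ}ᵀ) − σ(H_ℓ W_{1ℓ}ᵀ + A H_ℓ W_{2ℓ}ᵀ) with ε_0 = α supported on rows in S with entries bounded by ε. Then entrywise |ε_ℓ| ≤ a_ℓ 1_S v_ℓᵀ + r_ℓ, where a_ℓ = ε(τ+1)^ℓ, v_ℓ ∈ ℝ_+^d with ‖v_ℓ‖₁ ≤ d, and ‖r_ℓ‖₁ ≤ 2dεm(ℓ+1)(τ+1)^ℓ. -/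
open Matrix BigOperators Finset

/-- The iterates of a GNN with ReLU activations:
`H_{ℓ+1} = σ(H_ℓ W_{1ℓ}ᵀ + A H_ℓ W_{2ℓ}ᵀ)`. -/
noncomputable def gnnIter {V : Type*} [Fintype V] [DecidableEq V] {d : ℕ}
    (A : Matrix V V ℝ) (W1 W2 : ℕ → Matrix (Fin d) (Fin d) ℝ)
    (X : Matrix V (Fin d) ℝ) : ℕ → Matrix V (Fin d) ℝ
  | 0 => X
  | (l + 1) => Matrix.of fun i j =>
      max 0 ((gnnIter A W1 W2 X l * (W1 l)ᵀ + A * gnnIter A W1 W2 X l * (W2 l)ᵀ) i j)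

/-- Auxiliary: bound on the ℓ¹ size of the new remainder matrix. -/
private lemma aux_sum {V : Type*} [Fintype V] [DecidableEq V] {d : ℕ}
    (A : Matrix V V ℝ) (hA0 : ∀ i p, 0 ≤ A i p) (τ : ℕ)
    (hAcol : ∀ p, ∑ i, A i p = (τ : ℝ))
    (W1 W2 : Matrix (Fin d) (Fin d) ℝ)
    (hW1 : ∀ j : Fin d, ∑ i, |W1 i j| ≤ 1)
    (hW2 : ∀ j : Fin d, ∑ i, |W2 i j| ≤ 1)
    (r : Matrix V (Fin d) ℝ) (R : ℝ) (hrsum : ∑ i, ∑ j, |r i j| ≤ R)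
    (a : ℝ) (ha0 : 0 ≤ a) (c : V → ℝ) (hc0 : ∀ i, 0 ≤ c i)
    (M D : ℝ) (hcsum : ∑ i, c i ≤ M) (hM0 : 0 ≤ M)
    (u2 : Fin d → ℝ) (hu20 : ∀ j, 0 ≤ u2 j) (hu2sum : ∑ j, u2 j ≤ D) :
    ∑ i, ∑ j, |(∑ k, |r i k| * |W1 j k|)
        + (∑ p, A i p * ∑ k, |r p k| * |W2 j k|) + a * c i * u2 j|
      ≤ R + τ * R + a * M * D := by
  have key : ∀ (W : Matrix (Fin d) (Fin d) ℝ), (∀ j, ∑ i', |W i' j| ≤ 1) →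
      ∀ q : V, ∑ j, ∑ k, |r q k| * |W j k| ≤ ∑ k, |r q k| := by
    intro W hW q
    rw [Finset.sum_comm]
    calc ∑ k, ∑ j, |r q k| * |W j k| = ∑ k, |r q k| * ∑ j, |W j k| := by
          exact Finset.sum_congr rfl fun k _ => (Finset.mul_sum _ _ _).symm
      _ ≤ ∑ k, |r q k| * 1 :=
          Finset.sum_le_sum fun k _ => mul_le_mul_of_nonneg_left (hW k) (abs_nonneg _)
      _ = ∑ k, |r q k| := by simp
  have habs : ∀ i j, |(∑ k, |r i k| * |W1 j k|)
        + (∑ p, A i p * ∑ k, |r p k| * |W2 j k|) + a * c i * u2 j|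
      = (∑ k, |r i k| * |W1 j k|)
        + (∑ p, A i p * ∑ k, |r p k| * |W2 j k|) + a * c i * u2 j := by
    intro i j
    apply abs_of_nonneg
    have h1 : 0 ≤ ∑ k, |r i k| * |W1 j k| :=
      Finset.sum_nonneg fun k _ => mul_nonneg (abs_nonneg _) (abs_nonneg _)
    have h2 : 0 ≤ ∑ p, A i p * ∑ k, |r p k| * |W2 j k| :=
      Finset.sum_nonneg fun p _ => mul_nonneg (hA0 i p)
        (Finset.sum_nonneg fun k _ => mul_nonneg (abs_nonneg _) (abs_nonneg _))
    have h3 : 0 ≤ a * c i * u2 j := mul_nonneg (mul_nonneg ha0 (hc0 i)) (hu20 j)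
    linarith
  calc ∑ i, ∑ j, |(∑ k, |r i k| * |W1 j k|)
        + (∑ p, A i p * ∑ k, |r p k| * |W2 j k|) + a * c i * u2 j|
      = (∑ i, ∑ j, ∑ k, |r i k| * |W1 j k|)
        + (∑ i, ∑ j, ∑ p, A i p * ∑ k, |r p k| * |W2 j k|)
        + ∑ i, ∑ j, a * c i * u2 j := by
        rw [← Finset.sum_add_distrib, ← Finset.sum_add_distrib]
        exact Finset.sum_congr rfl fun i _ => by
          rw [← Finset.sum_add_distrib, ← Finset.sum_add_distrib]
          exact Finset.sum_congr rfl fun j _ => habs i j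
    _ ≤ R + τ * R + a * M * D := by
        have T1 : ∑ i, ∑ j, ∑ k, |r i k| * |W1 j k| ≤ R :=
          le_trans (Finset.sum_le_sum fun i _ => key W1 hW1 i) hrsum
        have T2 : ∑ i, ∑ j, ∑ p, A i p * ∑ k, |r p k| * |W2 j k| ≤ τ * R := by
          have e : ∑ i, ∑ j, ∑ p, A i p * ∑ k, |r p k| * |W2 j k|
              = ∑ p, (τ : ℝ) * ∑ j, ∑ k, |r p k| * |W2 j k| := by
            calc ∑ i, ∑ j, ∑ p, A i p * ∑ k, |r p k| * |W2 j k|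
                = ∑ i, ∑ p, A i p * ∑ j, ∑ k, |r p k| * |W2 j k| := by
                  refine Finset.sum_congr rfl fun i _ => ?_
                  rw [Finset.sum_comm]
                  exact Finset.sum_congr rfl fun p _ => (Finset.mul_sum _ _ _).symm
              _ = ∑ p, (∑ i, A i p) * ∑ j, ∑ k, |r p k| * |W2 j k| := by
                  rw [Finset.sum_comm]
                  exact Finset.sum_congr rfl fun p _ => (Finset.sum_mul _ _ _).symm
              _ = ∑ p, (τ : ℝ) * ∑ j, ∑ k, |r p k| * |W2 j k| := by
                  exact Finset.sum_congr rfl fun p _ => by rw [hAcol p]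
          rw [e, ← Finset.mul_sum]
          have : ∑ p, ∑ j, ∑ k, |r p k| * |W2 j k| ≤ R :=
            le_trans (Finset.sum_le_sum fun p _ => key W2 hW2 p) hrsum
          exact mul_le_mul_of_nonneg_left this (Nat.cast_nonneg τ)
        have T3 : ∑ i, ∑ j, a * c i * u2 j ≤ a * M * D := by
          have e : ∑ i, ∑ j, a * c i * u2 j = a * (∑ i, c i) * (∑ j, u2 j) := by
            calc ∑ i, ∑ j, a * c i * u2 j = ∑ i, (a * c i) * ∑ j, u2 j :=
                  Finset.sum_congr rfl fun i _ => (Finset.mul_sum _ _ _).symm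
              _ = (∑ i, a * c i) * ∑ j, u2 j := (Finset.sum_mul _ _ _).symm
              _ = a * (∑ i, c i) * (∑ j, u2 j) := by rw [← Finset.mul_sum]
          rw [e]
          have hc' : 0 ≤ ∑ i, c i := Finset.sum_nonneg fun i _ => hc0 i
          have hu' : 0 ≤ ∑ j, u2 j := Finset.sum_nonneg fun j _ => hu20 j
          exact mul_le_mul (mul_le_mul_of_nonneg_left hcsum ha0) hu2sum hu'
            (mul_nonneg ha0 hM0)
        linarith

/-- Auxiliary: pointwise propagation of the entrywise bound through one layer. -/
private lemma aux_pt {V : Type*} [Fintype V] [DecidableEq V] {d : ℕ}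
    (A : Matrix V V ℝ) (hA0 : ∀ i p, 0 ≤ A i p) (τ : ℕ)
    (hArow : ∀ i, ∑ p, A i p = (τ : ℝ))
    (W1 W2 : Matrix (Fin d) (Fin d) ℝ)
    (E r : Matrix V (Fin d) ℝ)
    (a : ℝ) (ha0 : 0 ≤ a)
    (s : V → ℝ) (hs1 : ∀ i, s i ≤ 1)
    (c : V → ℝ) (hc : ∀ i, c i = if s i = 1 then 0 else ∑ p, A i p * s p)
    (hsc : ∀ i, s i = 1 ∨ s i = 0)
    (v : Fin d → ℝ) (hv0 : ∀ k, 0 ≤ v k)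
    (hEb : ∀ i k, |E i k| ≤ a * s i * v k + |r i k|)
    (i : V) (j : Fin d) :
    |(E * W1ᵀ + A * E * W2ᵀ) i j| ≤
      a * s i * ((∑ k, |W1 j k| * v k) + (τ:ℝ) * ∑ k, |W2 j k| * v k)
      + ((∑ k, |r i k| * |W1 j k|) + (∑ p, A i p * ∑ k, |r p k| * |W2 j k|)
         + a * c i * ∑ k, |W2 j k| * v k) := by
  set u1 : ℝ := ∑ k, |W1 j k| * v k with hu1
  set u2 : ℝ := ∑ k, |W2 j k| * v k with hu2
  have hu20 : 0 ≤ u2 :=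
    Finset.sum_nonneg fun k _ => mul_nonneg (abs_nonneg _) (hv0 k)
  have eB : (E * W1ᵀ + A * E * W2ᵀ) i j
      = (∑ k, E i k * W1 j k) + ∑ p, A i p * ∑ k, E p k * W2 j k := by
    simp only [Matrix.add_apply, Matrix.mul_apply, Matrix.transpose_apply]
    congr 1
    calc ∑ k, (∑ p, A i p * E p k) * W2 j k
        = ∑ k, ∑ p, A i p * (E p k * W2 j k) := by
          refine Finset.sum_congr rfl fun k _ => ?_
          rw [Finset.sum_mul]
          exact Finset.sum_congr rfl fun p _ => by ring
      _ = ∑ p, ∑ k, A i p * (E p k * W2 j k) := Finset.sum_comm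
      _ = ∑ p, A i p * ∑ k, E p k * W2 j k :=
          Finset.sum_congr rfl fun p _ => (Finset.mul_sum _ _ _).symm
  have stepB : |(E * W1ᵀ + A * E * W2ᵀ) i j|
      ≤ (∑ k, |E i k| * |W1 j k|) + ∑ p, A i p * ∑ k, |E p k| * |W2 j k| := by
    rw [eB]
    refine (abs_add_le _ _).trans (add_le_add ?_ ?_)
    · exact (Finset.abs_sum_le_sum_abs _ _).trans
        (le_of_eq (Finset.sum_congr rfl fun k _ => abs_mul _ _))
    · refine (Finset.abs_sum_le_sum_abs _ _).trans (Finset.sum_le_sum fun p _ => ?_)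
      rw [abs_mul, abs_of_nonneg (hA0 i p)]
      refine mul_le_mul_of_nonneg_left ?_ (hA0 i p)
      exact (Finset.abs_sum_le_sum_abs _ _).trans
        (le_of_eq (Finset.sum_congr rfl fun k _ => abs_mul _ _))
  have part1 : ∑ k, |E i k| * |W1 j k| ≤ a * s i * u1 + ∑ k, |r i k| * |W1 j k| := by
    calc ∑ k, |E i k| * |W1 j k|
        ≤ ∑ k, (a * s i * v k + |r i k|) * |W1 j k| :=
          Finset.sum_le_sum fun k _ =>
            mul_le_mul_of_nonneg_right (hEb i k) (abs_nonneg _)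
      _ = a * s i * u1 + ∑ k, |r i k| * |W1 j k| := by
          rw [hu1, Finset.mul_sum, ← Finset.sum_add_distrib]
          exact Finset.sum_congr rfl fun k _ => by ring
  have part2 : ∑ p, A i p * ∑ k, |E p k| * |W2 j k|
      ≤ (∑ p, A i p * s p) * (a * u2) + ∑ p, A i p * ∑ k, |r p k| * |W2 j k| := by
    calc ∑ p, A i p * ∑ k, |E p k| * |W2 j k|
        ≤ ∑ p, A i p * (s p * (a * u2) + ∑ k, |r p k| * |W2 j k|) := by
          refine Finset.sum_le_sum fun p _ => mul_le_mul_of_nonneg_left ?_ (hA0 i p)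
          calc ∑ k, |E p k| * |W2 j k|
              ≤ ∑ k, (a * s p * v k + |r p k|) * |W2 j k| :=
                Finset.sum_le_sum fun k _ =>
                  mul_le_mul_of_nonneg_right (hEb p k) (abs_nonneg _)
            _ = s p * (a * u2) + ∑ k, |r p k| * |W2 j k| := by
                rw [hu2, Finset.mul_sum, Finset.mul_sum, ← Finset.sum_add_distrib]
                exact Finset.sum_congr rfl fun k _ => by ring
      _ = (∑ p, A i p * s p) * (a * u2) + ∑ p, A i p * ∑ k, |r p k| * |W2 j k| := by
          rw [Finset.sum_mul, ← Finset.sum_add_distrib]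
          exact Finset.sum_congr rfl fun p _ => by ring
  have stepD : ∑ p, A i p * s p ≤ (τ : ℝ) * s i + c i := by
    rcases hsc i with hi | hi
    · rw [hc i, if_pos hi, hi]
      calc ∑ p, A i p * s p ≤ ∑ p, A i p * 1 :=
            Finset.sum_le_sum fun p _ => mul_le_mul_of_nonneg_left (hs1 p) (hA0 i p)
        _ = (τ : ℝ) * 1 + 0 := by rw [← hArow i]; simp
    · rcases eq_or_ne (s i) 1 with h1 | h1
      · rw [h1] at hi; norm_num at hi
      · rw [hc i, if_neg h1, hi]; simp
  have stepD2 : (∑ p, A i p * s p) * (a * u2) ≤ ((τ:ℝ) * s i + c i) * (a * u2) :=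
    mul_le_mul_of_nonneg_right stepD (mul_nonneg ha0 hu20)
  calc |(E * W1ᵀ + A * E * W2ᵀ) i j|
      ≤ (∑ k, |E i k| * |W1 j k|) + ∑ p, A i p * ∑ k, |E p k| * |W2 j k| := stepB
    _ ≤ (a * s i * u1 + ∑ k, |r i k| * |W1 j k|)
        + ((∑ p, A i p * s p) * (a * u2) + ∑ p, A i p * ∑ k, |r p k| * |W2 j k|) :=
        add_le_add part1 part2
    _ ≤ (a * s i * u1 + ∑ k, |r i k| * |W1 j k|)
        + (((τ:ℝ) * s i + c i) * (a * u2) + ∑ p, A i p * ∑ k, |r p k| * |W2 j k|) := by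
        linarith
    _ = a * s i * (u1 + (τ:ℝ) * u2)
        + ((∑ k, |r i k| * |W1 j k|) + (∑ p, A i p * ∑ k, |r p k| * |W2 j k|)
           + a * c i * u2) := by ring

/-- Auxiliary: one-layer ReLU Lipschitz step. -/
private lemma aux_lip {V : Type*} [Fintype V] [DecidableEq V] {d : ℕ}
    (A : Matrix V V ℝ) (W1 W2 : ℕ → Matrix (Fin d) (Fin d) ℝ)
    (X α : Matrix V (Fin d) ℝ) (ℓ : ℕ) (i : V) (j : Fin d) :
    |(gnnIter A W1 W2 (X + α) (ℓ + 1) - gnnIter A W1 W2 X (ℓ + 1)) i j| ≤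
      |((gnnIter A W1 W2 (X + α) ℓ - gnnIter A W1 W2 X ℓ) * (W1 ℓ)ᵀ
        + A * (gnnIter A W1 W2 (X + α) ℓ - gnnIter A W1 W2 X ℓ) * (W2 ℓ)ᵀ) i j| := by
  set H' := gnnIter A W1 W2 (X + α) ℓ with hH'
  set H := gnnIter A W1 W2 X ℓ with hH
  have hmat : H' * (W1 ℓ)ᵀ + A * H' * (W2 ℓ)ᵀ - (H * (W1 ℓ)ᵀ + A * H * (W2 ℓ)ᵀ)
      = (H' - H) * (W1 ℓ)ᵀ + A * (H' - H) * (W2 ℓ)ᵀ := by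
    simp only [Matrix.sub_mul, Matrix.mul_sub]
    abel
  have e1 : (gnnIter A W1 W2 (X + α) (ℓ + 1) - gnnIter A W1 W2 X (ℓ + 1)) i j
      = max ((H' * (W1 ℓ)ᵀ + A * H' * (W2 ℓ)ᵀ) i j) 0
        - max ((H * (W1 ℓ)ᵀ + A * H * (W2 ℓ)ᵀ) i j) 0 := by
    show (gnnIter A W1 W2 (X + α) (ℓ + 1)) i j - (gnnIter A W1 W2 X (ℓ + 1)) i j = _
    rw [gnnIter, gnnIter]
    simp only [Matrix.of_apply, ← hH', ← hH, max_comm]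
  rw [e1]
  calc |max ((H' * (W1 ℓ)ᵀ + A * H' * (W2 ℓ)ᵀ) i j) 0
        - max ((H * (W1 ℓ)ᵀ + A * H * (W2 ℓ)ᵀ) i j) 0|
      ≤ |(H' * (W1 ℓ)ᵀ + A * H' * (W2 ℓ)ᵀ) i j - (H * (W1 ℓ)ᵀ + A * H * (W2 ℓ)ᵀ) i j| :=
        abs_max_sub_max_le_abs _ _ _
    _ = |((H' - H) * (W1 ℓ)ᵀ + A * (H' - H) * (W2 ℓ)ᵀ) i j| := by
        rw [← Matrix.sub_apply, hmat]

/-- Perturbation propagation bound: on a `τ`-regular graph with `m` cut edges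
between `S` and `T = Sᶜ`, a perturbation of magnitude `≤ ε` supported on `S`
satisfies, entrywise, `|ε_ℓ| ≤ ε(τ+1)^ℓ 1_S v_ℓᵀ + r_ℓ` with `v_ℓ ≥ 0`,
`‖v_ℓ‖₁ ≤ d` and `‖r_ℓ‖₁ ≤ 2dεm(ℓ+1)(τ+1)^ℓ`. -/
theorem stmt_9
    {V : Type*} [Fintype V] [DecidableEq V] {d : ℕ}
    (G : SimpleGraph V) [DecidableRel G.Adj]
    (τ : ℕ) (hreg : G.IsRegularOfDegree τ)
    (A : Matrix V V ℝ) (hA : A = G.adjMatrix ℝ)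
    (S : Finset V)
    (m : ℕ)
    (hm : m = (univ.filter (fun p : V × V => p.1 ∈ S ∧ p.2 ∉ S ∧ G.Adj p.1 p.2)).card)
    (W1 W2 : ℕ → Matrix (Fin d) (Fin d) ℝ)
    (hW1 : ∀ l : ℕ, ∀ j : Fin d, ∑ i, |W1 l i j| ≤ 1)
    (hW2 : ∀ l : ℕ, ∀ j : Fin d, ∑ i, |W2 l i j| ≤ 1)
    (X : Matrix V (Fin d) ℝ)
    (ε : ℝ) (hε : 0 ≤ ε)
    (α : Matrix V (Fin d) ℝ)
    (hαS : ∀ i, i ∉ S → ∀ j, α i j = 0)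
    (hαε : ∀ i j, |α i j| ≤ ε) :
    ∀ ℓ : ℕ, ∃ (v : Fin d → ℝ) (r : Matrix V (Fin d) ℝ),
      (∀ j, 0 ≤ v j) ∧ (∑ j, v j ≤ (d : ℝ)) ∧
      (∑ i, ∑ j, |r i j| ≤ 2 * d * ε * m * (ℓ + 1) * ((τ : ℝ) + 1) ^ ℓ) ∧
      (∀ i j, |(gnnIter A W1 W2 (X + α) ℓ - gnnIter A W1 W2 X ℓ) i j| ≤
        ε * ((τ : ℝ) + 1) ^ ℓ * (if i ∈ S then v j else 0) + r i j) := by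
  -- basic facts about A
  have hA0 : ∀ i p, 0 ≤ A i p := by
    intro i p; rw [hA, SimpleGraph.adjMatrix_apply]; positivity
  have hArow : ∀ i, ∑ p, A i p = (τ : ℝ) := by
    intro i
    rw [hA]; simp only [SimpleGraph.adjMatrix_apply, Finset.sum_boole]
    rw [← SimpleGraph.neighborFinset_eq_filter, ← SimpleGraph.degree, hreg i]
  have hAcol : ∀ p, ∑ i, A i p = (τ : ℝ) := by
    intro p
    have : ∀ i, A i p = A p i := by
      intro i; rw [hA]; simp only [SimpleGraph.adjMatrix_apply, G.adj_comm]
    rw [Finset.sum_congr rfl (fun i _ => this i), hArow p]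
  set s : V → ℝ := fun i => if i ∈ S then 1 else 0 with hs
  have hs0 : ∀ i, 0 ≤ s i := by intro i; simp only [hs]; positivity
  have hs1 : ∀ i, s i ≤ 1 := by intro i; simp only [hs]; split <;> norm_num
  have hsc : ∀ i, s i = 1 ∨ s i = 0 := by
    intro i; simp only [hs]; split
    · exact Or.inl rfl
    · exact Or.inr rfl
  set c : V → ℝ := fun i => if i ∈ S then 0 else ∑ p, A i p * s p with hc
  have hc' : ∀ i, c i = if s i = 1 then 0 else ∑ p, A i p * s p := by
    intro i; simp only [hc, hs]
    by_cases hi : i ∈ S <;> simp [hi]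
  have hc0 : ∀ i, 0 ≤ c i := by
    intro i; simp only [hc]; split
    · exact le_refl 0
    · exact Finset.sum_nonneg fun p _ => mul_nonneg (hA0 i p) (hs0 p)
  have hcsum : ∑ i, c i ≤ (m : ℝ) := by
    have e1 : ∑ i, c i
        = ∑ q : V × V, (if q.1 ∉ S ∧ q.2 ∈ S ∧ G.Adj q.1 q.2 then (1:ℝ) else 0) := by
      rw [Fintype.sum_prod_type]
      refine Finset.sum_congr rfl fun i _ => ?_
      simp only [hc]
      by_cases hi : i ∈ S
      · simp [hi]
      · simp only [hi, if_neg, if_false]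
        refine Finset.sum_congr rfl fun p _ => ?_
        rw [hA]
        simp only [hs, SimpleGraph.adjMatrix_apply]
        by_cases hp : p ∈ S <;> by_cases hadj : G.Adj i p <;>
          simp [hp, hadj, hi]
    have e2 : (univ.filter (fun q : V × V => q.1 ∉ S ∧ q.2 ∈ S ∧ G.Adj q.1 q.2)).card
        = (univ.filter (fun p : V × V => p.1 ∈ S ∧ p.2 ∉ S ∧ G.Adj p.1 p.2)).card := by
      apply Finset.card_bij' (fun q _ => q.swap) (fun q _ => q.swap) <;>
        simp +contextual [G.adj_comm]
    rw [e1, Finset.sum_boole, e2, ← hm]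
  have hτ1 : (0:ℝ) < (τ : ℝ) + 1 := by positivity
  intro ℓ
  induction ℓ with
  | zero =>
    refine ⟨fun _ => 1, 0, fun _ => zero_le_one, by simp, by simp; positivity, ?_⟩
    intro i j
    have : (gnnIter A W1 W2 (X + α) 0 - gnnIter A W1 W2 X 0) i j = α i j := by
      simp [gnnIter]
    rw [this]
    by_cases hi : i ∈ S
    · simpa [hi] using hαε i j
    · simp [hi, hαS i hi j]
  | succ ℓ ih =>
    obtain ⟨v, r, hv0, hvsum, hrsum, hbound⟩ := ih
    set a := ε * ((τ : ℝ) + 1) ^ ℓ with ha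
    have ha0 : 0 ≤ a := by positivity
    have hEb : ∀ i k, |(gnnIter A W1 W2 (X + α) ℓ - gnnIter A W1 W2 X ℓ) i k|
        ≤ a * s i * v k + |r i k| := by
      intro i k
      have h1 := hbound i k
      have h2 : ε * ((τ:ℝ) + 1) ^ ℓ * (if i ∈ S then v k else 0) = a * s i * v k := by
        simp only [hs, ha]; split <;> ring
      calc |(gnnIter A W1 W2 (X + α) ℓ - gnnIter A W1 W2 X ℓ) i k|
          ≤ ε * ((τ:ℝ) + 1) ^ ℓ * (if i ∈ S then v k else 0) + r i k := h1
        _ ≤ a * s i * v k + |r i k| := by rw [h2]; linarith [le_abs_self (r i k)]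
    have hu1sum : ∑ j, ∑ k, |W1 ℓ j k| * v k ≤ (d : ℝ) := by
      calc ∑ j, ∑ k, |W1 ℓ j k| * v k = ∑ k, (∑ j, |W1 ℓ j k|) * v k := by
            rw [Finset.sum_comm]
            exact Finset.sum_congr rfl fun k _ => (Finset.sum_mul _ _ _).symm
        _ ≤ ∑ k, 1 * v k := Finset.sum_le_sum fun k _ =>
            mul_le_mul_of_nonneg_right (hW1 ℓ k) (hv0 k)
        _ = ∑ k, v k := by simp
        _ ≤ (d : ℝ) := hvsum
    have hu2sum : ∑ j, ∑ k, |W2 ℓ j k| * v k ≤ (d : ℝ) := by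
      calc ∑ j, ∑ k, |W2 ℓ j k| * v k = ∑ k, (∑ j, |W2 ℓ j k|) * v k := by
            rw [Finset.sum_comm]
            exact Finset.sum_congr rfl fun k _ => (Finset.sum_mul _ _ _).symm
        _ ≤ ∑ k, 1 * v k := Finset.sum_le_sum fun k _ =>
            mul_le_mul_of_nonneg_right (hW2 ℓ k) (hv0 k)
        _ = ∑ k, v k := by simp
        _ ≤ (d : ℝ) := hvsum
    have hu10 : ∀ j, (0:ℝ) ≤ ∑ k, |W1 ℓ j k| * v k := fun j =>
      Finset.sum_nonneg fun k _ => mul_nonneg (abs_nonneg _) (hv0 k)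
    have hu20 : ∀ j, (0:ℝ) ≤ ∑ k, |W2 ℓ j k| * v k := fun j =>
      Finset.sum_nonneg fun k _ => mul_nonneg (abs_nonneg _) (hv0 k)
    refine ⟨fun j => ((∑ k, |W1 ℓ j k| * v k) + (τ:ℝ) * ∑ k, |W2 ℓ j k| * v k)
        / ((τ:ℝ) + 1),
      Matrix.of fun i j => (∑ k, |r i k| * |W1 ℓ j k|)
        + (∑ p, A i p * ∑ k, |r p k| * |W2 ℓ j k|)
        + a * c i * ∑ k, |W2 ℓ j k| * v k, ?_, ?_, ?_, ?_⟩
    · intro j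
      apply div_nonneg _ (le_of_lt hτ1)
      have h1 := hu10 j; have h2 := hu20 j
      have : (0:ℝ) ≤ (τ:ℝ) := Nat.cast_nonneg τ
      nlinarith
    · rw [← Finset.sum_div, div_le_iff₀ hτ1, Finset.sum_add_distrib, ← Finset.mul_sum]
      nlinarith [hu1sum, hu2sum, Nat.cast_nonneg (α := ℝ) τ, Nat.cast_nonneg (α := ℝ) d]
    · -- the r sum bound
      simp only [Matrix.of_apply]
      have hmain := aux_sum A hA0 τ hAcol (W1 ℓ) (W2 ℓ) (hW1 ℓ) (hW2 ℓ) r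
        (2 * d * ε * m * (ℓ + 1) * ((τ : ℝ) + 1) ^ ℓ) hrsum a ha0 c hc0
        (m : ℝ) (d : ℝ) hcsum (Nat.cast_nonneg m)
        (fun j => ∑ k, |W2 ℓ j k| * v k) hu20 hu2sum
      refine hmain.trans ?_
      have hP : (0:ℝ) ≤ ((τ:ℝ) + 1) ^ ℓ := by positivity
      have hX : (0:ℝ) ≤ (d:ℝ) * ε * (m:ℝ) * ((τ:ℝ) + 1) ^ ℓ := by positivity
      have hτ0 : (0:ℝ) ≤ (τ:ℝ) := Nat.cast_nonneg τ
      rw [pow_succ, ha]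
      push_cast
      nlinarith [mul_nonneg hX hτ0]
    · -- the pointwise bound
      intro i j
      simp only [Matrix.of_apply]
      have h1 := aux_lip A W1 W2 X α ℓ i j
      have h2 := aux_pt A hA0 τ hArow (W1 ℓ) (W2 ℓ)
        (gnnIter A W1 W2 (X + α) ℓ - gnnIter A W1 W2 X ℓ) r a ha0 s hs1 c hc' hsc
        v hv0 hEb i j
      refine (h1.trans h2).trans (le_of_eq ?_)
      have h3 : ε * ((τ:ℝ) + 1) ^ (ℓ + 1) *
          (if i ∈ S then ((∑ k, |W1 ℓ j k| * v k) + (τ:ℝ) * ∑ k, |W2 ℓ j k| * v k)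
            / ((τ:ℝ) + 1) else 0)
          = a * s i * ((∑ k, |W1 ℓ j k| * v k) + (τ:ℝ) * ∑ k, |W2 ℓ j k| * v k) := by
        simp only [hs, ha]
        by_cases hi : i ∈ S
        · simp only [hi, if_pos]
          rw [pow_succ]
          field_simp
        · simp [hi]
      rw [h3]
end

section
/- If a partition {α_1,…,α_c} of the vertices of graph G is 1-WL stable (equitable) and two classes α_r, α_{r'} have identical 'color sets' (the same multiset of neighbor-class counts), then merging α_r and α_{r'} into one class yields again an equitable partition. -/
open Matrix BigOperators Finset

/-- Merging two classes of an equitable (1-WL stable) partition that have the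
same neighbor-class counts (with respect to the merged partition) yields again
an equitable partition. -/
theorem stmt_18
    {V : Type*} [Fintype V] [DecidableEq V] {c : ℕ}
    (A : Matrix V V ℝ)
    (col : V → Fin c)
    (hstable : ∀ i i', col i = col i' → ∀ t : Fin c,
      ∑ j ∈ univ.filter (fun j => col j = t), A i j =
      ∑ j ∈ univ.filter (fun j => col j = t), A i' j)
    (r r' : Fin c)
    (col' : V → Fin c)
    (hcol' : col' = fun i => if col i = r' then r else col i)
    (hsame : ∀ t : Fin c, ∀ i i', col i = r → col i' = r' →
      ∑ j ∈ univ.filter (fun j => col' j = t), A i j =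
      ∑ j ∈ univ.filter (fun j => col' j = t), A i' j) :
    ∀ i i', col' i = col' i' → ∀ t : Fin c,
      ∑ j ∈ univ.filter (fun j => col' j = t), A i j =
      ∑ j ∈ univ.filter (fun j => col' j = t), A i' j := by
  have key : ∀ i : V, ∀ t : Fin c,
      ∑ j ∈ univ.filter (fun j => col' j = t), A i j
        = ∑ t' ∈ univ.filter (fun t' : Fin c => (if t' = r' then r else t') = t),
            ∑ j ∈ univ.filter (fun j => col j = t'), A i j := by
    intro i t
    rw [Finset.sum_filter, Finset.sum_filter,
      ← Finset.sum_fiberwise univ col (fun j => if col' j = t then A i j else 0)]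
    apply Finset.sum_congr rfl
    intro t' _
    by_cases h : (if t' = r' then r else t') = t
    · rw [if_pos h]
      apply Finset.sum_congr rfl
      intro j hj
      simp only [mem_filter, mem_univ, true_and] at hj
      rw [if_pos]
      rw [hcol']
      show (if col j = r' then r else col j) = t
      rw [hj]; exact h
    · rw [if_neg h]
      apply Finset.sum_eq_zero
      intro j hj
      simp only [mem_filter, mem_univ, true_and] at hj
      rw [if_neg]
      rw [hcol']
      show ¬(if col j = r' then r else col j) = t
      rw [hj]; exact h
  intro i i' h t
  by_cases hc : col i = col i'
  · rw [key i t, key i' t]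
    exact Finset.sum_congr rfl fun t' _ => hstable i i' hc t'
  · by_cases h1 : col i = r'
    · by_cases h2 : col i' = r'
      · exact absurd (h1.trans h2.symm) hc
      · have hi' : col i' = r := by
          have := h
          rw [hcol'] at this
          simpa [h1, h2] using this.symm
        exact (hsame t i' i hi' h1).symm
    · by_cases h2 : col i' = r'
      · have hi : col i = r := by
          have := h
          rw [hcol'] at this
          simpa [h1, h2] using this
        exact hsame t i i' hi h2
      · have : col i = col i' := by
          have := h
          rw [hcol'] at this
          simpa [h1, h2] using this
        exact absurd this hc
end
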